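/- arXiv:2010.07502 — 3 statements merged into one kernel-verified Lean document; each statement's English description precedes it below -/
import Mathlib

section
/- Let g be a symmetric positive-definite real 4×4 matrix and let R be an algebraic curvature tensor on Fin 4. With the Schouten tensor P, its trace J, and the Weyl tensor W defined from R and g as below, one has Scal² − 4 * |Ric|²_g + |Rm|²_g = |W|²_g − 8 * |P|²_g + 8 * J². -/
open Matrix Finset

section helpers
variable {α : Type*} [Fintype α]

lemma rot3 (f : α → α → α → ℝ) :
    ∑ x, ∑ a, ∑ b, f x a b = ∑ a, ∑ b, ∑ x, f x a b := by
  rw [Finset.sum_comm]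
  exact Finset.sum_congr rfl fun a _ => Finset.sum_comm

lemma rot4 (f : α → α → α → α → ℝ) :
    ∑ x, ∑ a, ∑ b, ∑ c, f x a b c = ∑ a, ∑ b, ∑ c, ∑ x, f x a b c := by
  rw [Finset.sum_comm]
  exact Finset.sum_congr rfl fun a _ => rot3 _

lemma rot5 (f : α → α → α → α → α → ℝ) :
    ∑ x, ∑ a, ∑ b, ∑ c, ∑ d, f x a b c d = ∑ a, ∑ b, ∑ c, ∑ d, ∑ x, f x a b c d := by
  rw [Finset.sum_comm]
  exact Finset.sum_congr rfl fun a _ => rot4 _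

lemma swap23 (f : α → α → α → α → ℝ) :
    ∑ i, ∑ j, ∑ k, ∑ l, f i j k l = ∑ i, ∑ k, ∑ j, ∑ l, f i j k l :=
  Finset.sum_congr rfl fun _ _ => Finset.sum_comm

lemma move2last (f : α → α → α → α → ℝ) :
    ∑ i, ∑ j, ∑ k, ∑ l, f i j k l = ∑ i, ∑ k, ∑ l, ∑ j, f i j k l :=
  Finset.sum_congr rfl fun _ _ => rot3 _

lemma move12last6 (f : α → α → α → α → α → α → ℝ) :
    ∑ x, ∑ y, ∑ a, ∑ b, ∑ c, ∑ d, f x y a b c d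
      = ∑ a, ∑ b, ∑ c, ∑ d, ∑ x, ∑ y, f x y a b c d := by
  calc ∑ x, ∑ y, ∑ a, ∑ b, ∑ c, ∑ d, f x y a b c d
      = ∑ x, ∑ a, ∑ b, ∑ c, ∑ d, ∑ y, f x y a b c d :=
        Finset.sum_congr rfl fun x _ => rot5 _
    _ = ∑ a, ∑ b, ∑ c, ∑ d, ∑ x, ∑ y, f x y a b c d :=
        rot5 fun x a b c d => ∑ y, f x y a b c d

lemma factor_ik_jl (F G : α → α → ℝ) :
    ∑ i, ∑ j, ∑ k, ∑ l, F i k * G j l = (∑ i, ∑ k, F i k) * (∑ j, ∑ l, G j l) := by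
  simp_rw [← Finset.mul_sum, ← Finset.sum_mul]
  rw [Finset.sum_mul_sum]

lemma factor_il_jk (F G : α → α → ℝ) :
    ∑ i, ∑ j, ∑ k, ∑ l, F i l * G j k = (∑ i, ∑ l, F i l) * (∑ j, ∑ k, G j k) := by
  simp_rw [← Finset.sum_mul, ← Finset.mul_sum]
  rw [← Finset.sum_mul]

lemma pull2 (C : ℝ) (f : α → α → ℝ) :
    ∑ a, ∑ b, C * f a b = C * ∑ a, ∑ b, f a b := by
  simp_rw [← Finset.mul_sum]

lemma sum2_congr {f f' : α → α → ℝ} (h : ∀ a b, f a b = f' a b) :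
    ∑ a, ∑ b, f a b = ∑ a, ∑ b, f' a b :=
  Finset.sum_congr rfl fun a _ => Finset.sum_congr rfl fun b _ => h a b

lemma sum4_congr {f f' : α → α → α → α → ℝ} (h : ∀ a b c d, f a b c d = f' a b c d) :
    ∑ a, ∑ b, ∑ c, ∑ d, f a b c d = ∑ a, ∑ b, ∑ c, ∑ d, f' a b c d :=
  Finset.sum_congr rfl fun a _ => Finset.sum_congr rfl fun b _ =>
    Finset.sum_congr rfl fun c _ => Finset.sum_congr rfl fun d _ => h a b c d

lemma sum6_congr {f f' : α → α → α → α → α → α → ℝ}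
    (h : ∀ a b c d e e', f a b c d e e' = f' a b c d e e') :
    ∑ a, ∑ b, ∑ c, ∑ d, ∑ e, ∑ e', f a b c d e e'
      = ∑ a, ∑ b, ∑ c, ∑ d, ∑ e, ∑ e', f' a b c d e e' :=
  Finset.sum_congr rfl fun a _ => Finset.sum_congr rfl fun b _ =>
    Finset.sum_congr rfl fun c _ => Finset.sum_congr rfl fun d _ =>
      Finset.sum_congr rfl fun e _ => Finset.sum_congr rfl fun e' _ => h a b c d e e'

lemma sum2_neg (f : α → α → ℝ) : ∑ a, ∑ b, -f a b = -∑ a, ∑ b, f a b := by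
  simp

end helpers

def upT (h : Fin 4 → Fin 4 → ℝ) (T : Fin 4 → Fin 4 → Fin 4 → Fin 4 → ℝ) :
    Fin 4 → Fin 4 → Fin 4 → Fin 4 → ℝ :=
  fun i j k l => ∑ a, ∑ b, ∑ c, ∑ d, h i a * h j b * h k c * h l d * T a b c d

def lowM (h X : Fin 4 → Fin 4 → ℝ) : Fin 4 → Fin 4 → ℝ :=
  fun x y => ∑ a, ∑ b, h x a * h y b * X a b

section metric
variable (h g : Fin 4 → Fin 4 → ℝ)
variable (hsym : ∀ i j, h i j = h j i) (gsym : ∀ i j, g i j = g j i)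
variable (hfact : ∀ i j, ∑ k, h i k * g k j = if i = j then (1:ℝ) else 0)

include hsym gsym hfact in
lemma ghfact : ∀ i j, ∑ k, g i k * h k j = if i = j then (1:ℝ) else 0 := by
  intro i j
  calc ∑ k, g i k * h k j = ∑ k, h j k * g k i := by
        exact Finset.sum_congr rfl fun k _ => by rw [hsym k j, gsym i k]; ring
    _ = if j = i then 1 else 0 := hfact j i
    _ = if i = j then 1 else 0 := by by_cases hij : i = j <;> simp [hij, Ne.symm]

include hsym gsym hfact in
lemma lowM_g : ∀ x y, lowM h g x y = h x y := by
  intro x y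
  unfold lowM
  have e1 : ∀ a b, h x a * h y b * g a b = h x a * (h y b * g b a) := fun a b => by
    rw [gsym a b]; ring
  rw [sum2_congr e1]
  have e2 : ∀ a, ∑ b, h x a * (h y b * g b a) = h x a * (if y = a then 1 else 0) := by
    intro a; rw [← Finset.mul_sum, hfact y a]
  rw [Finset.sum_congr rfl fun a _ => e2 a]
  simp [mul_ite]

include gsym hfact in
lemma trace_hg : (∑ i, ∑ j, h i j * g i j) = 4 := by
  have e : ∀ i, ∑ j, h i j * g i j = if i = i then (1:ℝ) else 0 := by
    intro i
    calc ∑ j, h i j * g i j = ∑ j, h i j * g j i :=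
          Finset.sum_congr rfl fun j _ => by rw [gsym i j]
      _ = _ := hfact i i
  rw [Finset.sum_congr rfl fun i _ => e i]
  simp [Fin.sum_univ_succ]

end metric

section curv
variable (h g : Fin 4 → Fin 4 → ℝ)
variable (hsym : ∀ i j, h i j = h j i) (gsym : ∀ i j, g i j = g j i)
variable (hfact : ∀ i j, ∑ k, h i k * g k j = if i = j then (1:ℝ) else 0)
variable (R : Fin 4 → Fin 4 → Fin 4 → Fin 4 → ℝ)
variable (hR1 : ∀ i j k l, R i j k l = -R j i k l)
variable (hR2 : ∀ i j k l, R i j k l = -R i j l k)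
variable (hR3 : ∀ i j k l, R i j k l = R k l i j)
variable (Ric : Fin 4 → Fin 4 → ℝ)
variable (hRic : ∀ i j, Ric i j = ∑ k, ∑ l, h k l * R i k l j)

include hRic in
lemma L_jk : ∀ i l, ∑ j, ∑ k, h j k * R i j k l = Ric i l := fun i l => (hRic i l).symm

include hRic hR2 in
lemma L_jl : ∀ i k, ∑ j, ∑ l, h j l * R i j k l = -Ric i k := by
  intro i k
  have e : ∀ j l, h j l * R i j k l = -(h j l * R i j l k) := by
    intro j l; rw [hR2 i j l k]; ring
  rw [sum2_congr e, sum2_neg, hRic i k]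

include hRic hR1 hR2 in
lemma L_il : ∀ j k, ∑ i, ∑ l, h i l * R i j k l = Ric j k := by
  intro j k
  have e : ∀ i l, h i l * R i j k l = h i l * R j i l k := by
    intro i l; rw [hR1 i j k l, hR2 j i k l]; ring
  rw [sum2_congr e, ← hRic j k]

include hsym hRic hR1 hR3 in
lemma L_ik : ∀ j l, ∑ i, ∑ k, h i k * R i j k l = -Ric l j := by
  intro j l
  have e : ∀ i k, h i k * R i j k l = h i k * R k l i j := fun i k => by
    rw [hR3 i j k l]
  rw [sum2_congr e, Finset.sum_comm]
  have e2 : ∀ k i, h i k * R k l i j = -(h k i * R l k i j) := by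
    intro k i; rw [hsym i k, hR1 k l i j]; ring
  rw [sum2_congr e2, sum2_neg, hRic l j]

include hsym hRic hR1 hR2 hR3 in
lemma Ric_symm : ∀ i j, Ric i j = Ric j i := by
  intro i j
  have e : ∀ k l, h k l * R i k l j = h l k * R j l k i := by
    intro k l
    rw [hR3 i k l j, hR1 l j i k, hR2 j l i k, hsym k l]
    ring
  rw [hRic i j, sum2_congr e, Finset.sum_comm, ← hRic j i]

include hR1 in
lemma upT12 : ∀ i j k l, upT h R i j k l = - upT h R j i k l := by
  intro i j k l
  unfold upT
  have e : ∀ a b c d, h i a * h j b * h k c * h l d * R a b c d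
      = -(h j b * h i a * h k c * h l d * R b a c d) := by
    intro a b c d; rw [hR1 a b c d]; ring
  rw [sum4_congr e]
  have : ∀ a b, (∑ c, ∑ d, -(h j b * h i a * h k c * h l d * R b a c d))
      = -(∑ c, ∑ d, h j b * h i a * h k c * h l d * R b a c d) := fun a b => sum2_neg _
  rw [sum2_congr this, sum2_neg, Finset.sum_comm]

include hR2 in
lemma upT34 : ∀ i j k l, upT h R i j k l = - upT h R i j l k := by
  intro i j k l
  unfold upT
  have e : ∀ a b c d, h i a * h j b * h k c * h l d * R a b c d
      = -(h i a * h j b * h l d * h k c * R a b d c) := by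
    intro a b c d; rw [hR2 a b c d]; ring
  rw [sum4_congr e]
  have inner : ∀ a b, ∑ c, ∑ d, -(h i a * h j b * h l d * h k c * R a b d c)
      = -∑ c, ∑ d, h i a * h j b * h l c * h k d * R a b c d := by
    intro a b
    rw [Finset.sum_comm]
    exact sum2_neg _
  rw [sum2_congr inner, sum2_neg]

include hsym gsym hfact hR2 hRic in
lemma contractJL : ∀ i k, ∑ j, ∑ l, g j l * upT h R i j k l = -(lowM h Ric i k) := by
  intro i k
  unfold upT
  simp_rw [Finset.mul_sum]
  rw [move12last6]
  have e : ∀ a b c d j l, g j l * (h i a * h j b * h k c * h l d * R a b c d)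
      = (h i a * h k c * R a b c d) * (g j l * (h j b * h l d)) := by intros; ring
  have e' : ∀ a b c d, (∑ j, ∑ l, g j l * (h i a * h j b * h k c * h l d * R a b c d))
      = ∑ j, ∑ l, (h i a * h k c * R a b c d) * (g j l * (h j b * h l d)) :=
    fun a b c d => sum2_congr (e a b c d)
  rw [sum4_congr e']
  have inner : ∀ b d, ∑ j, ∑ l, g j l * (h j b * h l d) = h b d := by
    intro b d
    have e1 : ∀ j l, g j l * (h j b * h l d) = h j b * (g j l * h l d) := by intros; ring
    rw [sum2_congr e1]
    have e2 : ∀ j, ∑ l, h j b * (g j l * h l d) = h j b * (if j = d then 1 else 0) := by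
      intro j; rw [← Finset.mul_sum, ghfact h g hsym gsym hfact j d]
    rw [Finset.sum_congr rfl fun j _ => e2 j]
    simp [mul_ite]
    exact hsym d b
  have step : ∀ a b c d, ∑ j, ∑ l, (h i a * h k c * R a b c d) * (g j l * (h j b * h l d))
      = (h i a * h k c * R a b c d) * h b d := by
    intro a b c d; rw [pull2, inner b d]
  rw [sum4_congr step, swap23]
  have e3 : ∀ a c b d, (h i a * h k c * R a b c d) * h b d
      = (h i a * h k c) * (h b d * R a b c d) := by intros; ring
  rw [sum4_congr e3]
  have step2 : ∀ a c, ∑ b, ∑ d, (h i a * h k c) * (h b d * R a b c d)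
      = (h i a * h k c) * (-Ric a c) := by
    intro a c; rw [pull2, L_jl h R hR2 Ric hRic a c]
  rw [sum2_congr step2]
  have e4 : ∀ a c, (h i a * h k c) * (-Ric a c) = -(h i a * h k c * Ric a c) := by
    intros; ring
  rw [sum2_congr e4, sum2_neg]
  rfl

include hsym gsym hfact hR1 hR2 hRic in
lemma contractJK : ∀ i l, ∑ j, ∑ k, g j k * upT h R i j k l = lowM h Ric i l := by
  intro i l
  have e : ∀ j k, g j k * upT h R i j k l = -(g j k * upT h R i j l k) := by
    intro j k; rw [upT34 h R hR2 i j k l]; ring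
  rw [sum2_congr e, sum2_neg, contractJL h g hsym gsym hfact R hR2 Ric hRic i l, neg_neg]

include hsym gsym hfact hR1 hR2 hRic in
lemma contractIK : ∀ j l, ∑ i, ∑ k, g i k * upT h R i j k l = -(lowM h Ric j l) := by
  intro j l
  have e : ∀ i k, g i k * upT h R i j k l = g i k * upT h R j i l k := by
    intro i k
    rw [upT12 h R hR1 i j k l, upT34 h R hR2 j i k l]
    ring
  rw [sum2_congr e, contractJL h g hsym gsym hfact R hR2 Ric hRic j l]

include hsym gsym hfact hR1 hR2 hRic in
lemma contractIL : ∀ j k, ∑ i, ∑ l, g i l * upT h R i j k l = lowM h Ric j k := by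
  intro j k
  have e : ∀ i l, g i l * upT h R i j k l = -(g i l * upT h R j i k l) := by
    intro i l; rw [upT12 h R hR1 i j k l]; ring
  rw [sum2_congr e, sum2_neg, contractJL h g hsym gsym hfact R hR2 Ric hRic j k, neg_neg]

end curv

section helpers2
variable {α : Type*} [Fintype α]

lemma pull4 (C : ℝ) (f : α → α → α → α → ℝ) :
    ∑ a, ∑ b, ∑ c, ∑ d, C * f a b c d = C * ∑ a, ∑ b, ∑ c, ∑ d, f a b c d := by
  simp_rw [← Finset.mul_sum]

lemma mul_out2 (F : α → α → ℝ) (C : ℝ) :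
    (∑ a, ∑ b, F a b) * C = ∑ a, ∑ b, F a b * C := by
  simp_rw [Finset.sum_mul]

lemma sum3_congr {f f' : α → α → α → ℝ} (h : ∀ a b c, f a b c = f' a b c) :
    ∑ a, ∑ b, ∑ c, f a b c = ∑ a, ∑ b, ∑ c, f' a b c :=
  Finset.sum_congr rfl fun a _ => Finset.sum_congr rfl fun b _ =>
    Finset.sum_congr rfl fun c _ => h a b c

lemma swap23of3 (f : α → α → α → ℝ) :
    ∑ a, ∑ b, ∑ c, f a b c = ∑ a, ∑ c, ∑ b, f a b c :=
  Finset.sum_congr rfl fun _ _ => Finset.sum_comm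

lemma perm_jl_ik (f : α → α → α → α → ℝ) :
    ∑ i, ∑ j, ∑ k, ∑ l, f i j k l = ∑ j, ∑ l, ∑ i, ∑ k, f i j k l := by
  rw [rot4]
  exact Finset.sum_congr rfl fun j _ => rot3 _

lemma perm_il_jk (f : α → α → α → α → ℝ) :
    ∑ i, ∑ j, ∑ k, ∑ l, f i j k l = ∑ i, ∑ l, ∑ j, ∑ k, f i j k l :=
  Finset.sum_congr rfl fun i _ => (rot3 fun l j k => f i j k l).symm

lemma perm_jk_il (f : α → α → α → α → ℝ) :
    ∑ i, ∑ j, ∑ k, ∑ l, f i j k l = ∑ j, ∑ k, ∑ i, ∑ l, f i j k l := by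
  rw [rot4]
  exact Finset.sum_congr rfl fun j _ => Finset.sum_congr rfl fun k _ => Finset.sum_comm

lemma move12last4 (f : α → α → α → α → ℝ) :
    ∑ i, ∑ j, ∑ k, ∑ l, f i j k l = ∑ k, ∑ l, ∑ i, ∑ j, f i j k l := by
  rw [rot4, rot4]

lemma factor_jl_ik (F G : α → α → ℝ) :
    ∑ i, ∑ j, ∑ k, ∑ l, F j l * G i k = (∑ j, ∑ l, F j l) * (∑ i, ∑ k, G i k) := by
  have e : ∀ i j k l, F j l * G i k = G i k * F j l := fun _ _ _ _ => mul_comm _ _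
  rw [sum4_congr e, factor_ik_jl, mul_comm]

lemma factor_jk_il (F G : α → α → ℝ) :
    ∑ i, ∑ j, ∑ k, ∑ l, F j k * G i l = (∑ j, ∑ k, F j k) * (∑ i, ∑ l, G i l) := by
  have e : ∀ i j k l, F j k * G i l = G i l * F j k := fun _ _ _ _ => mul_comm _ _
  rw [sum4_congr e, factor_il_jk, mul_comm]

end helpers2

section helpers3
variable {α : Type*} [Fintype α]

lemma swap34 (f : α → α → α → α → ℝ) :
    ∑ i, ∑ j, ∑ k, ∑ l, f i j k l = ∑ i, ∑ j, ∑ l, ∑ k, f i j k l :=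
  Finset.sum_congr rfl fun _ _ => Finset.sum_congr rfl fun _ _ => Finset.sum_comm

end helpers3

lemma dsum1 (F : Fin 4 → ℝ) (c : Fin 4) :
    (∑ x, F x * (if c = x then (1:ℝ) else 0)) = F c := by simp [mul_ite]

lemma dsum2 (F : Fin 4 → ℝ) (c : Fin 4) :
    (∑ x, F x * (if x = c then (1:ℝ) else 0)) = F c := by simp [mul_ite]
theorem key (h g : Fin 4 → Fin 4 → ℝ)
    (hsym : ∀ i j, h i j = h j i) (gsym : ∀ i j, g i j = g j i)
    (hfact : ∀ i j, ∑ k, h i k * g k j = if i = j then (1:ℝ) else 0)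
    (R : Fin 4 → Fin 4 → Fin 4 → Fin 4 → ℝ)
    (hR1 : ∀ i j k l, R i j k l = -R j i k l)
    (hR2 : ∀ i j k l, R i j k l = -R i j l k)
    (hR3 : ∀ i j k l, R i j k l = R k l i j)
    (Ric : Fin 4 → Fin 4 → ℝ)
    (hRic : ∀ i j, Ric i j = ∑ k, ∑ l, h k l * R i k l j)
    (Scal : ℝ) (hScal : Scal = ∑ i, ∑ j, h i j * Ric i j)
    (normRicSq : ℝ)
    (hnormRic : normRicSq = ∑ i, ∑ j, ∑ k, ∑ l, h i k * h j l * Ric i j * Ric k l)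
    (normRmSq : ℝ)
    (hnormRm : normRmSq = ∑ i, ∑ j, ∑ k, ∑ l, ∑ a, ∑ b, ∑ c, ∑ d,
        h i a * h j b * h k c * h l d * R i j k l * R a b c d)
    (P : Fin 4 → Fin 4 → ℝ)
    (hP : ∀ i j, P i j = (1 / 2) * Ric i j - (1 / 12) * Scal * g i j)
    (J : ℝ) (hJ : J = ∑ i, ∑ j, h i j * P i j)
    (normPSq : ℝ)
    (hnormP : normPSq = ∑ i, ∑ j, ∑ k, ∑ l, h i k * h j l * P i j * P k l)
    (W : Fin 4 → Fin 4 → Fin 4 → Fin 4 → ℝ)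
    (hW : ∀ i j k l, W i j k l =
      R i j k l - P i l * g j k - P j k * g i l + P i k * g j l + P j l * g i k)
    (normWSq : ℝ)
    (hnormW : normWSq = ∑ i, ∑ j, ∑ k, ∑ l, ∑ a, ∑ b, ∑ c, ∑ d,
        h i a * h j b * h k c * h l d * W i j k l * W a b c d) :
    Scal ^ 2 - 4 * normRicSq + normRmSq = normWSq - 8 * normPSq + 8 * J ^ 2 := by
  -- flatten the 8-fold norms
  have flat : ∀ T : Fin 4 → Fin 4 → Fin 4 → Fin 4 → ℝ,
      (∑ i, ∑ j, ∑ k, ∑ l, ∑ a, ∑ b, ∑ c, ∑ d,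
        h i a * h j b * h k c * h l d * T i j k l * T a b c d)
      = ∑ i, ∑ j, ∑ k, ∑ l, T i j k l * upT h T i j k l := by
    intro T
    refine sum4_congr fun i j k l => ?_
    have e : ∀ a b c d, h i a * h j b * h k c * h l d * T i j k l * T a b c d
        = T i j k l * (h i a * h j b * h k c * h l d * T a b c d) := by intros; ring
    rw [sum4_congr e, pull4]
    rfl
  have hnormW' : normWSq = ∑ i, ∑ j, ∑ k, ∑ l, W i j k l * upT h W i j k l := by
    rw [hnormW, flat]
  have hnormRm' : normRmSq = ∑ i, ∑ j, ∑ k, ∑ l, R i j k l * upT h R i j k l := by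
    rw [hnormRm, flat]
  -- expansion of the raised Weyl tensor
  have WuEq : ∀ i j k l, upT h W i j k l = upT h R i j k l
      + (lowM h P i k * h j l + lowM h P j l * h i k
         - lowM h P i l * h j k - lowM h P j k * h i l) := by
    intro i j k l
    have e : ∀ a b c d, h i a * h j b * h k c * h l d * W a b c d
        = h i a * h j b * h k c * h l d * R a b c d
          + (h i a * h k c * P a c) * (h j b * h l d * g b d)
          + (h j b * h l d * P b d) * (h i a * h k c * g a c)
          - (h i a * h l d * P a d) * (h j b * h k c * g b c)
          - (h j b * h k c * P b c) * (h i a * h l d * g a d) := by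
      intro a b c d; rw [hW a b c d]; ring
    show (∑ a, ∑ b, ∑ c, ∑ d, h i a * h j b * h k c * h l d * W a b c d) = _
    rw [sum4_congr e]
    simp only [Finset.sum_add_distrib, Finset.sum_sub_distrib]
    have f2 : (∑ a, ∑ b, ∑ c, ∑ d, (h i a * h k c * P a c) * (h j b * h l d * g b d))
        = (∑ a, ∑ c, h i a * h k c * P a c) * (∑ b, ∑ d, h j b * h l d * g b d) :=
      factor_ik_jl _ _
    have f3 : (∑ a, ∑ b, ∑ c, ∑ d, (h j b * h l d * P b d) * (h i a * h k c * g a c))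
        = (∑ b, ∑ d, h j b * h l d * P b d) * (∑ a, ∑ c, h i a * h k c * g a c) :=
      factor_jl_ik _ _
    have f4 : (∑ a, ∑ b, ∑ c, ∑ d, (h i a * h l d * P a d) * (h j b * h k c * g b c))
        = (∑ a, ∑ d, h i a * h l d * P a d) * (∑ b, ∑ c, h j b * h k c * g b c) :=
      factor_il_jk _ _
    have f5 : (∑ a, ∑ b, ∑ c, ∑ d, (h j b * h k c * P b c) * (h i a * h l d * g a d))
        = (∑ b, ∑ c, h j b * h k c * P b c) * (∑ a, ∑ d, h i a * h l d * g a d) :=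
      factor_jk_il _ _
    rw [f2, f3, f4, f5]
    have r0 : (∑ a, ∑ b, ∑ c, ∑ d, h i a * h j b * h k c * h l d * R a b c d)
        = upT h R i j k l := rfl
    have p1 : (∑ a, ∑ c, h i a * h k c * P a c) = lowM h P i k := rfl
    have p2 : (∑ b, ∑ d, h j b * h l d * P b d) = lowM h P j l := rfl
    have p3 : (∑ a, ∑ d, h i a * h l d * P a d) = lowM h P i l := rfl
    have p4 : (∑ b, ∑ c, h j b * h k c * P b c) = lowM h P j k := rfl
    have g1 : (∑ b, ∑ d, h j b * h l d * g b d) = h j l := lowM_g h g hsym gsym hfact j l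
    have g2 : (∑ a, ∑ c, h i a * h k c * g a c) = h i k := lowM_g h g hsym gsym hfact i k
    have g3 : (∑ b, ∑ c, h j b * h k c * g b c) = h j k := lowM_g h g hsym gsym hfact j k
    have g4 : (∑ a, ∑ d, h i a * h l d * g a d) = h i l := lowM_g h g hsym gsym hfact i l
    rw [r0, p1, p2, p3, p4, g1, g2, g3, g4]
    ring
  -- grand pointwise expansion
  have grand : ∀ i j k l, W i j k l * upT h W i j k l =
      R i j k l * upT h R i j k l
      + (P i k * (g j l * upT h R i j k l)
         + P j l * (g i k * upT h R i j k l)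
         - P i l * (g j k * upT h R i j k l)
         - P j k * (g i l * upT h R i j k l))
      + (lowM h P i k * (h j l * R i j k l)
         + lowM h P j l * (h i k * R i j k l)
         - lowM h P i l * (h j k * R i j k l)
         - lowM h P j k * (h i l * R i j k l))
      + ((lowM h P i k * P i k) * (h j l * g j l)
         + (lowM h P i k * g i k) * (h j l * P j l)
         - (lowM h P i k * P i l) * (h j l * g j k)
         - (lowM h P i k * P j k) * (h j l * g i l)
         + (h i k * P i k) * (lowM h P j l * g j l)
         + (h i k * g i k) * (lowM h P j l * P j l)
         - (lowM h P j l * P i l) * (h i k * g j k)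
         - (lowM h P j l * P j k) * (h i k * g i l)
         - (lowM h P i l * P i k) * (h j k * g j l)
         - (lowM h P i l * P j l) * (h j k * g i k)
         + (lowM h P i l * P i l) * (h j k * g j k)
         + (lowM h P i l * g i l) * (h j k * P j k)
         - (lowM h P j k * P i k) * (h i l * g j l)
         - (lowM h P j k * P j l) * (h i l * g i k)
         + (h i l * P i l) * (lowM h P j k * g j k)
         + (lowM h P j k * P j k) * (h i l * g i l)) := by
    intro i j k l
    rw [hW i j k l, WuEq i j k l]
    ring
  have EW := hnormW'
  rw [sum4_congr grand] at EW
  simp only [Finset.sum_add_distrib, Finset.sum_sub_distrib] at EW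
  -- delta helpers
  have hfact' : ∀ x y, (∑ k, h k x * g k y) = if x = y then (1:ℝ) else 0 := by
    intro x y
    calc ∑ k, h k x * g k y = ∑ k, h x k * g k y :=
          Finset.sum_congr rfl fun k _ => by rw [hsym k x]
      _ = _ := hfact x y
  have ghf : ∀ x y, (∑ k, g x k * h k y) = if x = y then (1:ℝ) else 0 :=
    ghfact h g hsym gsym hfact
  -- contraction of lowM h X against g
  have lowXg : ∀ X : Fin 4 → Fin 4 → ℝ,
      (∑ x, ∑ y, lowM h X x y * g x y) = ∑ a, ∑ b, h a b * X a b := by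
    intro X
    have e0 : ∀ x y, lowM h X x y * g x y
        = ∑ a, ∑ b, (h x a * h y b * X a b) * g x y := fun x y => mul_out2 _ _
    rw [sum2_congr e0, move12last4]
    have e1 : ∀ a b x y, (h x a * h y b * X a b) * g x y
        = X a b * (h x a * (h y b * g x y)) := by intros; ring
    rw [sum4_congr e1]
    have e2 : ∀ a b, (∑ x, ∑ y, X a b * (h x a * (h y b * g x y))) = X a b * h a b := by
      intro a b
      rw [pull2]
      congr 1
      have e3 : ∀ x, (∑ y, h x a * (h y b * g x y)) = h x a * (if x = b then 1 else 0) := by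
        intro x
        rw [← Finset.mul_sum]
        congr 1
        calc ∑ y, h y b * g x y = ∑ y, g x y * h y b :=
              Finset.sum_congr rfl fun y _ => mul_comm _ _
          _ = _ := ghf x b
      rw [Finset.sum_congr rfl fun x _ => e3 x, dsum2 (fun x => h x a) b]
      exact hsym b a
    rw [sum2_congr e2]
    exact sum2_congr fun a b => mul_comm _ _
  -- T2..T5 : Ru against P⊗g
  have t2 : (∑ i, ∑ j, ∑ k, ∑ l, P i k * (g j l * upT h R i j k l))
      = -(∑ x, ∑ y, lowM h Ric x y * P x y) := by
    rw [swap23]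
    have e : ∀ i k, (∑ j, ∑ l, P i k * (g j l * upT h R i j k l))
        = -(lowM h Ric i k * P i k) := by
      intro i k
      rw [pull2, contractJL h g hsym gsym hfact R hR2 Ric hRic i k]
      ring
    rw [sum2_congr e, sum2_neg]
  have t3 : (∑ i, ∑ j, ∑ k, ∑ l, P j l * (g i k * upT h R i j k l))
      = -(∑ x, ∑ y, lowM h Ric x y * P x y) := by
    rw [perm_jl_ik]
    have e : ∀ j l, (∑ i, ∑ k, P j l * (g i k * upT h R i j k l))
        = -(lowM h Ric j l * P j l) := by
      intro j l
      rw [pull2, contractIK h g hsym gsym hfact R hR1 hR2 Ric hRic j l]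
      ring
    rw [sum2_congr e, sum2_neg]
  have t4 : (∑ i, ∑ j, ∑ k, ∑ l, P i l * (g j k * upT h R i j k l))
      = (∑ x, ∑ y, lowM h Ric x y * P x y) := by
    rw [perm_il_jk]
    have e : ∀ i l, (∑ j, ∑ k, P i l * (g j k * upT h R i j k l))
        = lowM h Ric i l * P i l := by
      intro i l
      rw [pull2, contractJK h g hsym gsym hfact R hR1 hR2 Ric hRic i l]
      ring
    rw [sum2_congr e]
  have t5 : (∑ i, ∑ j, ∑ k, ∑ l, P j k * (g i l * upT h R i j k l))
      = (∑ x, ∑ y, lowM h Ric x y * P x y) := by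
    rw [perm_jk_il]
    have e : ∀ j k, (∑ i, ∑ l, P j k * (g i l * upT h R i j k l))
        = lowM h Ric j k * P j k := by
      intro j k
      rw [pull2, contractIL h g hsym gsym hfact R hR1 hR2 Ric hRic j k]
      ring
    rw [sum2_congr e]
  -- T6..T9 : Pu⊗h against R
  have t6 : (∑ i, ∑ j, ∑ k, ∑ l, lowM h P i k * (h j l * R i j k l))
      = -(∑ x, ∑ y, lowM h P x y * Ric x y) := by
    rw [swap23]
    have e : ∀ i k, (∑ j, ∑ l, lowM h P i k * (h j l * R i j k l))
        = -(lowM h P i k * Ric i k) := by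
      intro i k
      rw [pull2, L_jl h R hR2 Ric hRic i k]
      ring
    rw [sum2_congr e, sum2_neg]
  have t7 : (∑ i, ∑ j, ∑ k, ∑ l, lowM h P j l * (h i k * R i j k l))
      = -(∑ x, ∑ y, lowM h P x y * Ric x y) := by
    rw [perm_jl_ik]
    have e : ∀ j l, (∑ i, ∑ k, lowM h P j l * (h i k * R i j k l))
        = -(lowM h P j l * Ric j l) := by
      intro j l
      rw [pull2, L_ik h hsym R hR1 hR3 Ric hRic j l,
        Ric_symm h hsym R hR1 hR2 hR3 Ric hRic l j]
      ring
    rw [sum2_congr e, sum2_neg]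
  have t8 : (∑ i, ∑ j, ∑ k, ∑ l, lowM h P i l * (h j k * R i j k l))
      = (∑ x, ∑ y, lowM h P x y * Ric x y) := by
    rw [perm_il_jk]
    have e : ∀ i l, (∑ j, ∑ k, lowM h P i l * (h j k * R i j k l))
        = lowM h P i l * Ric i l := by
      intro i l
      rw [pull2, L_jk h R Ric hRic i l]
    rw [sum2_congr e]
  have t9 : (∑ i, ∑ j, ∑ k, ∑ l, lowM h P j k * (h i l * R i j k l))
      = (∑ x, ∑ y, lowM h P x y * Ric x y) := by
    rw [perm_jk_il]
    have e : ∀ j k, (∑ i, ∑ l, lowM h P j k * (h i l * R i j k l))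
        = lowM h P j k * Ric j k := by
      intro j k
      rw [pull2, L_il h R hR1 hR2 Ric hRic j k]
    rw [sum2_congr e]
  -- factorizable AA terms
  have u1 : (∑ i, ∑ j, ∑ k, ∑ l, (lowM h P i k * P i k) * (h j l * g j l))
      = (∑ x, ∑ y, lowM h P x y * P x y) * 4 := by
    rw [factor_ik_jl, trace_hg h g gsym hfact]
  have u2 : (∑ i, ∑ j, ∑ k, ∑ l, (lowM h P i k * g i k) * (h j l * P j l))
      = (∑ a, ∑ b, h a b * P a b) * (∑ a, ∑ b, h a b * P a b) := by
    rw [factor_ik_jl, lowXg P]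
  have u5 : (∑ i, ∑ j, ∑ k, ∑ l, (h i k * P i k) * (lowM h P j l * g j l))
      = (∑ a, ∑ b, h a b * P a b) * (∑ a, ∑ b, h a b * P a b) := by
    rw [factor_ik_jl, lowXg P]
  have u6 : (∑ i, ∑ j, ∑ k, ∑ l, (h i k * g i k) * (lowM h P j l * P j l))
      = 4 * (∑ x, ∑ y, lowM h P x y * P x y) := by
    rw [factor_ik_jl, trace_hg h g gsym hfact]
  have u11 : (∑ i, ∑ j, ∑ k, ∑ l, (lowM h P i l * P i l) * (h j k * g j k))
      = (∑ x, ∑ y, lowM h P x y * P x y) * 4 := by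
    rw [factor_il_jk, trace_hg h g gsym hfact]
  have u12 : (∑ i, ∑ j, ∑ k, ∑ l, (lowM h P i l * g i l) * (h j k * P j k))
      = (∑ a, ∑ b, h a b * P a b) * (∑ a, ∑ b, h a b * P a b) := by
    rw [factor_il_jk, lowXg P]
  have u15 : (∑ i, ∑ j, ∑ k, ∑ l, (h i l * P i l) * (lowM h P j k * g j k))
      = (∑ a, ∑ b, h a b * P a b) * (∑ a, ∑ b, h a b * P a b) := by
    rw [factor_il_jk, lowXg P]
  have u16 : (∑ i, ∑ j, ∑ k, ∑ l, (lowM h P j k * P j k) * (h i l * g i l))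
      = (∑ x, ∑ y, lowM h P x y * P x y) * 4 := by
    rw [factor_jk_il, trace_hg h g gsym hfact]
  -- delta AA terms
  have m1 : (∑ i, ∑ j, ∑ k, ∑ l, (lowM h P i k * P i l) * (h j l * g j k))
      = ∑ x, ∑ y, lowM h P x y * P x y := by
    rw [move2last]
    have e : ∀ i k l, (∑ j, (lowM h P i k * P i l) * (h j l * g j k))
        = (lowM h P i k * P i l) * (if l = k then 1 else 0) := by
      intro i k l
      rw [← Finset.mul_sum]
      congr 1
      calc ∑ j, h j l * g j k = ∑ j, h l j * g j k :=
            Finset.sum_congr rfl fun j _ => by rw [hsym j l]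
        _ = _ := hfact l k
    rw [sum3_congr e]
    exact sum2_congr fun i k => dsum2 (fun l => lowM h P i k * P i l) k
  have m2 : (∑ i, ∑ j, ∑ k, ∑ l, (lowM h P i k * P j k) * (h j l * g i l))
      = ∑ x, ∑ y, lowM h P x y * P x y := by
    have e : ∀ i j k, (∑ l, (lowM h P i k * P j k) * (h j l * g i l))
        = (lowM h P i k * P j k) * (if i = j then 1 else 0) := by
      intro i j k
      rw [← Finset.mul_sum]
      congr 1
      calc ∑ l, h j l * g i l = ∑ l, g i l * h l j :=
            Finset.sum_congr rfl fun l _ => by rw [hsym j l]; ring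
        _ = _ := ghf i j
    rw [sum3_congr e, swap23of3]
    exact sum2_congr fun i k => dsum1 (fun j => lowM h P i k * P j k) i
  have m3 : (∑ i, ∑ j, ∑ k, ∑ l, (lowM h P j l * P i l) * (h i k * g j k))
      = ∑ x, ∑ y, lowM h P x y * P x y := by
    rw [swap34]
    have e : ∀ i j l, (∑ k, (lowM h P j l * P i l) * (h i k * g j k))
        = (lowM h P j l * P i l) * (if i = j then 1 else 0) := by
      intro i j l
      rw [← Finset.mul_sum]
      congr 1
      calc ∑ k, h i k * g j k = ∑ k, h i k * g k j :=
            Finset.sum_congr rfl fun k _ => by rw [gsym j k]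
        _ = _ := hfact i j
    rw [sum3_congr e, swap23of3]
    have : ∀ i l, (∑ j, (lowM h P j l * P i l) * (if i = j then 1 else 0))
        = lowM h P i l * P i l := fun i l => dsum1 (fun j => lowM h P j l * P i l) i
    rw [sum2_congr this]
  have m4 : (∑ i, ∑ j, ∑ k, ∑ l, (lowM h P j l * P j k) * (h i k * g i l))
      = ∑ x, ∑ y, lowM h P x y * P x y := by
    rw [rot4]
    have e : ∀ j k l, (∑ i, (lowM h P j l * P j k) * (h i k * g i l))
        = (lowM h P j l * P j k) * (if k = l then 1 else 0) := by
      intro j k l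
      rw [← Finset.mul_sum]
      congr 1
      calc ∑ i, h i k * g i l = ∑ i, h k i * g i l :=
            Finset.sum_congr rfl fun i _ => by rw [hsym i k]
        _ = _ := hfact k l
    rw [sum3_congr e]
    exact sum2_congr fun j k => dsum1 (fun l => lowM h P j l * P j k) k
  have m5 : (∑ i, ∑ j, ∑ k, ∑ l, (lowM h P i l * P i k) * (h j k * g j l))
      = ∑ x, ∑ y, lowM h P x y * P x y := by
    rw [move2last]
    have e : ∀ i k l, (∑ j, (lowM h P i l * P i k) * (h j k * g j l))
        = (lowM h P i l * P i k) * (if k = l then 1 else 0) := by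
      intro i k l
      rw [← Finset.mul_sum]
      congr 1
      calc ∑ j, h j k * g j l = ∑ j, h k j * g j l :=
            Finset.sum_congr rfl fun j _ => by rw [hsym j k]
        _ = _ := hfact k l
    rw [sum3_congr e]
    exact sum2_congr fun i k => dsum1 (fun l => lowM h P i l * P i k) k
  have m6 : (∑ i, ∑ j, ∑ k, ∑ l, (lowM h P i l * P j l) * (h j k * g i k))
      = ∑ x, ∑ y, lowM h P x y * P x y := by
    rw [swap34]
    have e : ∀ i j l, (∑ k, (lowM h P i l * P j l) * (h j k * g i k))
        = (lowM h P i l * P j l) * (if j = i then 1 else 0) := by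
      intro i j l
      rw [← Finset.mul_sum]
      congr 1
      calc ∑ k, h j k * g i k = ∑ k, h j k * g k i :=
            Finset.sum_congr rfl fun k _ => by rw [gsym i k]
        _ = _ := hfact j i
    rw [sum3_congr e, swap23of3]
    have : ∀ i l, (∑ j, (lowM h P i l * P j l) * (if j = i then 1 else 0))
        = lowM h P i l * P i l := fun i l => dsum2 (fun j => lowM h P i l * P j l) i
    rw [sum2_congr this]
  have m7 : (∑ i, ∑ j, ∑ k, ∑ l, (lowM h P j k * P i k) * (h i l * g j l))
      = ∑ x, ∑ y, lowM h P x y * P x y := by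
    have e : ∀ i j k, (∑ l, (lowM h P j k * P i k) * (h i l * g j l))
        = (lowM h P j k * P i k) * (if i = j then 1 else 0) := by
      intro i j k
      rw [← Finset.mul_sum]
      congr 1
      calc ∑ l, h i l * g j l = ∑ l, h i l * g l j :=
            Finset.sum_congr rfl fun l _ => by rw [gsym j l]
        _ = _ := hfact i j
    rw [sum3_congr e, swap23of3]
    have : ∀ i k, (∑ j, (lowM h P j k * P i k) * (if i = j then 1 else 0))
        = lowM h P i k * P i k := fun i k => dsum1 (fun j => lowM h P j k * P i k) i
    rw [sum2_congr this]
  have m8 : (∑ i, ∑ j, ∑ k, ∑ l, (lowM h P j k * P j l) * (h i l * g i k))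
      = ∑ x, ∑ y, lowM h P x y * P x y := by
    rw [rot4]
    have e : ∀ j k l, (∑ i, (lowM h P j k * P j l) * (h i l * g i k))
        = (lowM h P j k * P j l) * (if l = k then 1 else 0) := by
      intro j k l
      rw [← Finset.mul_sum]
      congr 1
      calc ∑ i, h i l * g i k = ∑ i, h l i * g i k :=
            Finset.sum_congr rfl fun i _ => by rw [hsym i l]
        _ = _ := hfact l k
    rw [sum3_congr e]
    exact sum2_congr fun j k => dsum2 (fun l => lowM h P j k * P j l) k
  -- algebraic relations
  have qPPe : (∑ x, ∑ y, lowM h P x y * P x y) = normPSq := by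
    rw [hnormP]
    have e0 : ∀ x y, lowM h P x y * P x y
        = ∑ a, ∑ b, (h x a * h y b * P a b) * P x y := fun x y => mul_out2 _ _
    rw [sum2_congr e0]
    exact sum4_congr fun x y a b => by ring
  have qRRe : (∑ x, ∑ y, lowM h Ric x y * Ric x y) = normRicSq := by
    rw [hnormRic]
    have e0 : ∀ x y, lowM h Ric x y * Ric x y
        = ∑ a, ∑ b, (h x a * h y b * Ric a b) * Ric x y := fun x y => mul_out2 _ _
    rw [sum2_congr e0]
    exact sum4_congr fun x y a b => by ring
  have Pu_eq : ∀ x y, lowM h P x y = (1/2) * lowM h Ric x y - (1/12) * Scal * h x y := by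
    intro x y
    have e : ∀ a b, h x a * h y b * P a b
        = (1/2) * (h x a * h y b * Ric a b) - ((1/12) * Scal) * (h x a * h y b * g a b) := by
      intro a b; rw [hP a b]; ring
    show (∑ a, ∑ b, h x a * h y b * P a b) = _
    rw [sum2_congr e]
    simp only [Finset.sum_sub_distrib]
    rw [pull2, pull2]
    have hg2 : (∑ a, ∑ b, h x a * h y b * g a b) = h x y := lowM_g h g hsym gsym hfact x y
    have hr2 : (∑ a, ∑ b, h x a * h y b * Ric a b) = lowM h Ric x y := rfl
    rw [hg2, hr2]
  have e_qPR : (∑ x, ∑ y, lowM h P x y * Ric x y)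
      = (1/2) * normRicSq - (1/12) * (Scal * Scal) := by
    have e : ∀ x y, lowM h P x y * Ric x y
        = (1/2) * (lowM h Ric x y * Ric x y) - ((1/12) * Scal) * (h x y * Ric x y) := by
      intro x y; rw [Pu_eq x y]; ring
    rw [sum2_congr e]
    simp only [Finset.sum_sub_distrib]
    rw [pull2, pull2, qRRe, ← hScal]
    ring
  have e_qRP : (∑ x, ∑ y, lowM h Ric x y * P x y)
      = (1/2) * normRicSq - (1/12) * (Scal * Scal) := by
    have e : ∀ x y, lowM h Ric x y * P x y
        = (1/2) * (lowM h Ric x y * Ric x y) - ((1/12) * Scal) * (lowM h Ric x y * g x y) := by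
      intro x y; rw [hP x y]; ring
    rw [sum2_congr e]
    simp only [Finset.sum_sub_distrib]
    rw [pull2, pull2, qRRe, lowXg Ric, ← hScal]
    ring
  have e_J : Scal = 6 * J := by
    have e : ∀ i j, h i j * P i j
        = (1/2) * (h i j * Ric i j) - ((1/12) * Scal) * (h i j * g i j) := by
      intro i j; rw [hP i j]; ring
    have eJ : J = (1/2) * Scal - ((1/12) * Scal) * 4 := by
      rw [hJ, sum2_congr e]
      simp only [Finset.sum_sub_distrib]
      rw [pull2, pull2, ← hScal, trace_hg h g gsym hfact]
    rw [eJ]; ring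
  -- assemble
  rw [← hnormRm', t2, t3, t4, t5, t6, t7, t8, t9, u1, u2, u5, u6, u11, u12, u15, u16,
    m1, m2, m3, m4, m5, m6, m7, m8, qPPe, e_qRP, e_qPR, ← hJ] at EW
  rw [e_J] at EW ⊢
  linear_combination -EW

theorem stmt_2 (g : Matrix (Fin 4) (Fin 4) ℝ) (hg : g.PosDef) (hgsym : g.IsSymm)
    (R : Fin 4 → Fin 4 → Fin 4 → Fin 4 → ℝ)
    (hR1 : ∀ i j k l, R i j k l = -R j i k l)
    (hR2 : ∀ i j k l, R i j k l = -R i j l k)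
    (hR3 : ∀ i j k l, R i j k l = R k l i j)
    (hBianchi : ∀ i j k l, R i j k l + R i k l j + R i l j k = 0)
    (Ric : Fin 4 → Fin 4 → ℝ)
    (hRic : ∀ i j, Ric i j = ∑ k, ∑ l, g⁻¹ k l * R i k l j)
    (Scal : ℝ) (hScal : Scal = ∑ i, ∑ j, g⁻¹ i j * Ric i j)
    (normRicSq : ℝ)
    (hnormRic : normRicSq =
      ∑ i, ∑ j, ∑ k, ∑ l, g⁻¹ i k * g⁻¹ j l * Ric i j * Ric k l)
    (normRmSq : ℝ)
    (hnormRm : normRmSq =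
      ∑ i, ∑ j, ∑ k, ∑ l, ∑ a, ∑ b, ∑ c, ∑ d,
        g⁻¹ i a * g⁻¹ j b * g⁻¹ k c * g⁻¹ l d * R i j k l * R a b c d)
    (P : Fin 4 → Fin 4 → ℝ)
    (hP : ∀ i j, P i j = (1 / 2) * Ric i j - (1 / 12) * Scal * g i j)
    (J : ℝ) (hJ : J = ∑ i, ∑ j, g⁻¹ i j * P i j)
    (normPSq : ℝ)
    (hnormP : normPSq =
      ∑ i, ∑ j, ∑ k, ∑ l, g⁻¹ i k * g⁻¹ j l * P i j * P k l)
    (W : Fin 4 → Fin 4 → Fin 4 → Fin 4 → ℝ)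
    (hW : ∀ i j k l, W i j k l =
      R i j k l - P i l * g j k - P j k * g i l + P i k * g j l + P j l * g i k)
    (normWSq : ℝ)
    (hnormW : normWSq =
      ∑ i, ∑ j, ∑ k, ∑ l, ∑ a, ∑ b, ∑ c, ∑ d,
        g⁻¹ i a * g⁻¹ j b * g⁻¹ k c * g⁻¹ l d * W i j k l * W a b c d) :
    Scal ^ 2 - 4 * normRicSq + normRmSq = normWSq - 8 * normPSq + 8 * J ^ 2 := by
  have hdet : IsUnit g.det := hg.det_pos.ne'.isUnit
  have hsym : ∀ i j, g⁻¹ i j = g⁻¹ j i := by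
    intro i j
    have h2 : (g⁻¹)ᵀ = g⁻¹ := by rw [Matrix.transpose_nonsing_inv, hgsym.eq]
    calc g⁻¹ i j = (g⁻¹)ᵀ j i := rfl
      _ = g⁻¹ j i := by rw [h2]
  have gsym : ∀ i j, g i j = g j i := fun i j => hgsym.apply j i
  have hfact : ∀ i j, ∑ k, g⁻¹ i k * g k j = if i = j then (1:ℝ) else 0 := by
    intro i j
    calc ∑ k, g⁻¹ i k * g k j = (g⁻¹ * g) i j := (Matrix.mul_apply).symm
      _ = (1 : Matrix (Fin 4) (Fin 4) ℝ) i j := by rw [Matrix.nonsing_inv_mul g hdet]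
      _ = _ := Matrix.one_apply
  exact key (fun i j => g⁻¹ i j) (fun i j => g i j) hsym gsym hfact R hR1 hR2 hR3
    Ric hRic Scal hScal normRicSq hnormRic normRmSq hnormRm P hP J hJ
    normPSq hnormP W hW normWSq hnormW
end

section
/- Let h be a symmetric positive-definite real 3×3 matrix, let Rh be an algebraic curvature tensor on Fin 3, and let L be a symmetric real 3×3 matrix. Define the 'ambient' tensor Rg by Rg μ ν ρ σ = Rh μ ν ρ σ − L μ σ * L ν ρ + L μ ρ * L ν σ (the Gauss equation). Set H = tr (h⁻¹ * L), L̊ = L − (H/3) • h, Ric μ ν = ∑_{κ,λ} h⁻¹ κ λ * Rh μ κ λ ν, and Scal = ∑_{μ,ν} h⁻¹ μ ν * Ric μ ν. Then (1/4) * (det h)⁻¹ * ∑_{σ,τ ∈ Equiv.Perm (Fin 3)} sgn σ * sgn τ * Rg (σ 0) (σ 1) (τ 0) (τ 1) * L (σ 2) (τ 2) = tr (h⁻¹ * L̊ * h⁻¹ * Ric) − (1/6) * H * Scal + tr ((h⁻¹ * L̊)³) + (1/9) * H³ − (1/2) * H * tr ((h⁻¹ * L̊)²). -/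
open Matrix Finset

private lemma perm3sum (f : Equiv.Perm (Fin 3) → ℝ) : (∑ σ, f σ) =
    f 1 + f (Equiv.swap 0 1) + f (Equiv.swap 0 2) + f (Equiv.swap 1 2)
      + f (finRotate 3) + f ((finRotate 3)*(finRotate 3)) := by
  rw [show (Finset.univ : Finset (Equiv.Perm (Fin 3))) =
    {1, Equiv.swap 0 1, Equiv.swap 0 2, Equiv.swap 1 2, finRotate 3,
      (finRotate 3)*(finRotate 3)} from by decide]
  rw [Finset.sum_insert (by decide), Finset.sum_insert (by decide),
    Finset.sum_insert (by decide), Finset.sum_insert (by decide),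
    Finset.sum_insert (by decide), Finset.sum_singleton]
  ring

theorem stmt_6 (h : Matrix (Fin 3) (Fin 3) ℝ) (hh : h.PosDef) (hhsym : h.IsSymm)
    (Rh : Fin 3 → Fin 3 → Fin 3 → Fin 3 → ℝ)
    (hRh1 : ∀ i j k l, Rh i j k l = -Rh j i k l)
    (hRh2 : ∀ i j k l, Rh i j k l = -Rh i j l k)
    (hRh3 : ∀ i j k l, Rh i j k l = Rh k l i j)
    (hBianchi : ∀ i j k l, Rh i j k l + Rh i k l j + Rh i l j k = 0)
    (L : Matrix (Fin 3) (Fin 3) ℝ) (hLsym : L.IsSymm)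
    (Rg : Fin 3 → Fin 3 → Fin 3 → Fin 3 → ℝ)
    (hRg : ∀ μ ν ρ σ, Rg μ ν ρ σ =
      Rh μ ν ρ σ - L μ σ * L ν ρ + L μ ρ * L ν σ)
    (H : ℝ) (hH : H = (h⁻¹ * L).trace)
    (L₀ : Matrix (Fin 3) (Fin 3) ℝ) (hL₀ : L₀ = L - (H / 3) • h)
    (Ric : Matrix (Fin 3) (Fin 3) ℝ)
    (hRic : ∀ μ ν, Ric μ ν = ∑ κ, ∑ l, h⁻¹ κ l * Rh μ κ l ν)
    (Scal : ℝ) (hScal : Scal = ∑ μ, ∑ ν, h⁻¹ μ ν * Ric μ ν) :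
    (1 / 4) * (h.det)⁻¹ *
        ∑ σ : Equiv.Perm (Fin 3), ∑ τ : Equiv.Perm (Fin 3),
          ((Equiv.Perm.sign σ : ℤ) : ℝ) * ((Equiv.Perm.sign τ : ℤ) : ℝ) *
            Rg (σ 0) (σ 1) (τ 0) (τ 1) * L (σ 2) (τ 2) =
      (h⁻¹ * L₀ * h⁻¹ * Ric).trace - (1 / 6) * H * Scal
        + ((h⁻¹ * L₀) * (h⁻¹ * L₀) * (h⁻¹ * L₀)).trace
        + (1 / 9) * H ^ 3
        - (1 / 2) * H * ((h⁻¹ * L₀) * (h⁻¹ * L₀)).trace := by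
  have hdet0 : IsUnit h.det := isUnit_iff_ne_zero.mpr hh.det_pos.ne'
  have hinv : h⁻¹ * h = 1 := Matrix.nonsing_inv_mul h hdet0
  have hdetinv : (h.det)⁻¹ = (h⁻¹).det := by
    rw [Matrix.det_nonsing_inv, Ring.inverse_eq_inv]
  have hksym : (h⁻¹).IsSymm := by
    unfold Matrix.IsSymm
    rw [Matrix.transpose_nonsing_inv, hhsym.eq]
  have k10 : h⁻¹ 1 0 = h⁻¹ 0 1 := hksym.apply 0 1
  have k20 : h⁻¹ 2 0 = h⁻¹ 0 2 := hksym.apply 0 2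
  have k21 : h⁻¹ 2 1 = h⁻¹ 1 2 := hksym.apply 1 2
  have l10 : L 1 0 = L 0 1 := hLsym.apply 0 1
  have l20 : L 2 0 = L 0 2 := hLsym.apply 0 2
  have l21 : L 2 1 = L 1 2 := hLsym.apply 1 2
  have z1 : ∀ i k l, Rh i i k l = 0 := fun i k l => by linarith [hRh1 i i k l]
  have z2 : ∀ i j k, Rh i j k k = 0 := fun i j k => by linarith [hRh2 i j k k]
  have e0110 : Rh 0 1 1 0 = -Rh 0 1 0 1 := by linarith [hRh1 0 1 1 0, hRh1 1 0 1 0, hRh2 0 1 1 0, hRh2 0 1 0 1, hRh2 1 0 1 0, hRh2 1 0 0 1, hRh3 0 1 0 1, hRh3 0 1 0 1, hRh3 0 1 1 0, hRh3 1 0 0 1, hRh1 0 1 0 1, hRh1 1 0 0 1]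
  have e0120 : Rh 0 1 2 0 = -Rh 0 1 0 2 := by linarith [hRh1 0 1 2 0, hRh1 1 0 2 0, hRh2 0 1 2 0, hRh2 0 1 0 2, hRh2 1 0 2 0, hRh2 1 0 0 2, hRh3 0 1 0 2, hRh3 0 2 0 1, hRh3 0 1 2 0, hRh3 2 0 0 1, hRh1 0 1 0 2, hRh1 1 0 0 2]
  have e0121 : Rh 0 1 2 1 = -Rh 0 1 1 2 := by linarith [hRh1 0 1 2 1, hRh1 1 0 2 1, hRh2 0 1 2 1, hRh2 0 1 1 2, hRh2 1 0 2 1, hRh2 1 0 1 2, hRh3 0 1 1 2, hRh3 1 2 0 1, hRh3 0 1 2 1, hRh3 2 1 0 1, hRh1 0 1 1 2, hRh1 1 0 1 2]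
  have e0201 : Rh 0 2 0 1 = Rh 0 1 0 2 := by linarith [hRh1 0 2 0 1, hRh1 2 0 0 1, hRh2 0 2 0 1, hRh2 0 2 1 0, hRh2 2 0 0 1, hRh2 2 0 1 0, hRh3 0 1 0 2, hRh3 0 2 0 1, hRh3 0 2 0 1, hRh3 0 1 0 2, hRh1 0 2 1 0, hRh1 2 0 1 0]
  have e0210 : Rh 0 2 1 0 = -Rh 0 1 0 2 := by linarith [hRh1 0 2 1 0, hRh1 2 0 1 0, hRh2 0 2 1 0, hRh2 0 2 0 1, hRh2 2 0 1 0, hRh2 2 0 0 1, hRh3 0 1 0 2, hRh3 0 2 0 1, hRh3 0 2 1 0, hRh3 1 0 0 2, hRh1 0 2 0 1, hRh1 2 0 0 1]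
  have e0220 : Rh 0 2 2 0 = -Rh 0 2 0 2 := by linarith [hRh1 0 2 2 0, hRh1 2 0 2 0, hRh2 0 2 2 0, hRh2 0 2 0 2, hRh2 2 0 2 0, hRh2 2 0 0 2, hRh3 0 2 0 2, hRh3 0 2 0 2, hRh3 0 2 2 0, hRh3 2 0 0 2, hRh1 0 2 0 2, hRh1 2 0 0 2]
  have e0221 : Rh 0 2 2 1 = -Rh 0 2 1 2 := by linarith [hRh1 0 2 2 1, hRh1 2 0 2 1, hRh2 0 2 2 1, hRh2 0 2 1 2, hRh2 2 0 2 1, hRh2 2 0 1 2, hRh3 0 2 1 2, hRh3 1 2 0 2, hRh3 0 2 2 1, hRh3 2 1 0 2, hRh1 0 2 1 2, hRh1 2 0 1 2]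
  have e1001 : Rh 1 0 0 1 = -Rh 0 1 0 1 := by linarith [hRh1 1 0 0 1, hRh1 0 1 0 1, hRh2 1 0 0 1, hRh2 1 0 1 0, hRh2 0 1 0 1, hRh2 0 1 1 0, hRh3 0 1 0 1, hRh3 0 1 0 1, hRh3 1 0 0 1, hRh3 0 1 1 0, hRh1 1 0 1 0, hRh1 0 1 1 0]
  have e1002 : Rh 1 0 0 2 = -Rh 0 1 0 2 := by linarith [hRh1 1 0 0 2, hRh1 0 1 0 2, hRh2 1 0 0 2, hRh2 1 0 2 0, hRh2 0 1 0 2, hRh2 0 1 2 0, hRh3 0 1 0 2, hRh3 0 2 0 1, hRh3 1 0 0 2, hRh3 0 2 1 0, hRh1 1 0 2 0, hRh1 0 1 2 0]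
  have e1010 : Rh 1 0 1 0 = Rh 0 1 0 1 := by linarith [hRh1 1 0 1 0, hRh1 0 1 1 0, hRh2 1 0 1 0, hRh2 1 0 0 1, hRh2 0 1 1 0, hRh2 0 1 0 1, hRh3 0 1 0 1, hRh3 0 1 0 1, hRh3 1 0 1 0, hRh3 1 0 1 0, hRh1 1 0 0 1, hRh1 0 1 0 1]
  have e1012 : Rh 1 0 1 2 = -Rh 0 1 1 2 := by linarith [hRh1 1 0 1 2, hRh1 0 1 1 2, hRh2 1 0 1 2, hRh2 1 0 2 1, hRh2 0 1 1 2, hRh2 0 1 2 1, hRh3 0 1 1 2, hRh3 1 2 0 1, hRh3 1 0 1 2, hRh3 1 2 1 0, hRh1 1 0 2 1, hRh1 0 1 2 1]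
  have e1020 : Rh 1 0 2 0 = Rh 0 1 0 2 := by linarith [hRh1 1 0 2 0, hRh1 0 1 2 0, hRh2 1 0 2 0, hRh2 1 0 0 2, hRh2 0 1 2 0, hRh2 0 1 0 2, hRh3 0 1 0 2, hRh3 0 2 0 1, hRh3 1 0 2 0, hRh3 2 0 1 0, hRh1 1 0 0 2, hRh1 0 1 0 2]
  have e1021 : Rh 1 0 2 1 = Rh 0 1 1 2 := by linarith [hRh1 1 0 2 1, hRh1 0 1 2 1, hRh2 1 0 2 1, hRh2 1 0 1 2, hRh2 0 1 2 1, hRh2 0 1 1 2, hRh3 0 1 1 2, hRh3 1 2 0 1, hRh3 1 0 2 1, hRh3 2 1 1 0, hRh1 1 0 1 2, hRh1 0 1 1 2]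
  have e1201 : Rh 1 2 0 1 = Rh 0 1 1 2 := by linarith [hRh1 1 2 0 1, hRh1 2 1 0 1, hRh2 1 2 0 1, hRh2 1 2 1 0, hRh2 2 1 0 1, hRh2 2 1 1 0, hRh3 0 1 1 2, hRh3 1 2 0 1, hRh3 1 2 0 1, hRh3 0 1 1 2, hRh1 1 2 1 0, hRh1 2 1 1 0]
  have e1202 : Rh 1 2 0 2 = Rh 0 2 1 2 := by linarith [hRh1 1 2 0 2, hRh1 2 1 0 2, hRh2 1 2 0 2, hRh2 1 2 2 0, hRh2 2 1 0 2, hRh2 2 1 2 0, hRh3 0 2 1 2, hRh3 1 2 0 2, hRh3 1 2 0 2, hRh3 0 2 1 2, hRh1 1 2 2 0, hRh1 2 1 2 0]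
  have e1210 : Rh 1 2 1 0 = -Rh 0 1 1 2 := by linarith [hRh1 1 2 1 0, hRh1 2 1 1 0, hRh2 1 2 1 0, hRh2 1 2 0 1, hRh2 2 1 1 0, hRh2 2 1 0 1, hRh3 0 1 1 2, hRh3 1 2 0 1, hRh3 1 2 1 0, hRh3 1 0 1 2, hRh1 1 2 0 1, hRh1 2 1 0 1]
  have e1220 : Rh 1 2 2 0 = -Rh 0 2 1 2 := by linarith [hRh1 1 2 2 0, hRh1 2 1 2 0, hRh2 1 2 2 0, hRh2 1 2 0 2, hRh2 2 1 2 0, hRh2 2 1 0 2, hRh3 0 2 1 2, hRh3 1 2 0 2, hRh3 1 2 2 0, hRh3 2 0 1 2, hRh1 1 2 0 2, hRh1 2 1 0 2]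
  have e1221 : Rh 1 2 2 1 = -Rh 1 2 1 2 := by linarith [hRh1 1 2 2 1, hRh1 2 1 2 1, hRh2 1 2 2 1, hRh2 1 2 1 2, hRh2 2 1 2 1, hRh2 2 1 1 2, hRh3 1 2 1 2, hRh3 1 2 1 2, hRh3 1 2 2 1, hRh3 2 1 1 2, hRh1 1 2 1 2, hRh1 2 1 1 2]
  have e2001 : Rh 2 0 0 1 = -Rh 0 1 0 2 := by linarith [hRh1 2 0 0 1, hRh1 0 2 0 1, hRh2 2 0 0 1, hRh2 2 0 1 0, hRh2 0 2 0 1, hRh2 0 2 1 0, hRh3 0 1 0 2, hRh3 0 2 0 1, hRh3 2 0 0 1, hRh3 0 1 2 0, hRh1 2 0 1 0, hRh1 0 2 1 0]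
  have e2002 : Rh 2 0 0 2 = -Rh 0 2 0 2 := by linarith [hRh1 2 0 0 2, hRh1 0 2 0 2, hRh2 2 0 0 2, hRh2 2 0 2 0, hRh2 0 2 0 2, hRh2 0 2 2 0, hRh3 0 2 0 2, hRh3 0 2 0 2, hRh3 2 0 0 2, hRh3 0 2 2 0, hRh1 2 0 2 0, hRh1 0 2 2 0]
  have e2010 : Rh 2 0 1 0 = Rh 0 1 0 2 := by linarith [hRh1 2 0 1 0, hRh1 0 2 1 0, hRh2 2 0 1 0, hRh2 2 0 0 1, hRh2 0 2 1 0, hRh2 0 2 0 1, hRh3 0 1 0 2, hRh3 0 2 0 1, hRh3 2 0 1 0, hRh3 1 0 2 0, hRh1 2 0 0 1, hRh1 0 2 0 1]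
  have e2012 : Rh 2 0 1 2 = -Rh 0 2 1 2 := by linarith [hRh1 2 0 1 2, hRh1 0 2 1 2, hRh2 2 0 1 2, hRh2 2 0 2 1, hRh2 0 2 1 2, hRh2 0 2 2 1, hRh3 0 2 1 2, hRh3 1 2 0 2, hRh3 2 0 1 2, hRh3 1 2 2 0, hRh1 2 0 2 1, hRh1 0 2 2 1]
  have e2020 : Rh 2 0 2 0 = Rh 0 2 0 2 := by linarith [hRh1 2 0 2 0, hRh1 0 2 2 0, hRh2 2 0 2 0, hRh2 2 0 0 2, hRh2 0 2 2 0, hRh2 0 2 0 2, hRh3 0 2 0 2, hRh3 0 2 0 2, hRh3 2 0 2 0, hRh3 2 0 2 0, hRh1 2 0 0 2, hRh1 0 2 0 2]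
  have e2021 : Rh 2 0 2 1 = Rh 0 2 1 2 := by linarith [hRh1 2 0 2 1, hRh1 0 2 2 1, hRh2 2 0 2 1, hRh2 2 0 1 2, hRh2 0 2 2 1, hRh2 0 2 1 2, hRh3 0 2 1 2, hRh3 1 2 0 2, hRh3 2 0 2 1, hRh3 2 1 2 0, hRh1 2 0 1 2, hRh1 0 2 1 2]
  have e2101 : Rh 2 1 0 1 = -Rh 0 1 1 2 := by linarith [hRh1 2 1 0 1, hRh1 1 2 0 1, hRh2 2 1 0 1, hRh2 2 1 1 0, hRh2 1 2 0 1, hRh2 1 2 1 0, hRh3 0 1 1 2, hRh3 1 2 0 1, hRh3 2 1 0 1, hRh3 0 1 2 1, hRh1 2 1 1 0, hRh1 1 2 1 0]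
  have e2102 : Rh 2 1 0 2 = -Rh 0 2 1 2 := by linarith [hRh1 2 1 0 2, hRh1 1 2 0 2, hRh2 2 1 0 2, hRh2 2 1 2 0, hRh2 1 2 0 2, hRh2 1 2 2 0, hRh3 0 2 1 2, hRh3 1 2 0 2, hRh3 2 1 0 2, hRh3 0 2 2 1, hRh1 2 1 2 0, hRh1 1 2 2 0]
  have e2110 : Rh 2 1 1 0 = Rh 0 1 1 2 := by linarith [hRh1 2 1 1 0, hRh1 1 2 1 0, hRh2 2 1 1 0, hRh2 2 1 0 1, hRh2 1 2 1 0, hRh2 1 2 0 1, hRh3 0 1 1 2, hRh3 1 2 0 1, hRh3 2 1 1 0, hRh3 1 0 2 1, hRh1 2 1 0 1, hRh1 1 2 0 1]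
  have e2112 : Rh 2 1 1 2 = -Rh 1 2 1 2 := by linarith [hRh1 2 1 1 2, hRh1 1 2 1 2, hRh2 2 1 1 2, hRh2 2 1 2 1, hRh2 1 2 1 2, hRh2 1 2 2 1, hRh3 1 2 1 2, hRh3 1 2 1 2, hRh3 2 1 1 2, hRh3 1 2 2 1, hRh1 2 1 2 1, hRh1 1 2 2 1]
  have e2120 : Rh 2 1 2 0 = Rh 0 2 1 2 := by linarith [hRh1 2 1 2 0, hRh1 1 2 2 0, hRh2 2 1 2 0, hRh2 2 1 0 2, hRh2 1 2 2 0, hRh2 1 2 0 2, hRh3 0 2 1 2, hRh3 1 2 0 2, hRh3 2 1 2 0, hRh3 2 0 2 1, hRh1 2 1 0 2, hRh1 1 2 0 2]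
  have e2121 : Rh 2 1 2 1 = Rh 1 2 1 2 := by linarith [hRh1 2 1 2 1, hRh1 1 2 2 1, hRh2 2 1 2 1, hRh2 2 1 1 2, hRh2 1 2 2 1, hRh2 1 2 1 2, hRh3 1 2 1 2, hRh3 1 2 1 2, hRh3 2 1 2 1, hRh3 2 1 2 1, hRh1 2 1 1 2, hRh1 1 2 1 2]
  have hA : h⁻¹ * L₀ = h⁻¹ * L - (H/3) • (1 : Matrix (Fin 3) (Fin 3) ℝ) := by
    rw [hL₀, Matrix.mul_sub, Matrix.mul_smul, hinv]
  have s1 : Equiv.Perm.sign (1 : Equiv.Perm (Fin 3)) = 1 := by decide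
  have s2 : Equiv.Perm.sign (Equiv.swap (0:Fin 3) 1) = -1 := by decide
  have s3 : Equiv.Perm.sign (Equiv.swap (0:Fin 3) 2) = -1 := by decide
  have s4 : Equiv.Perm.sign (Equiv.swap (1:Fin 3) 2) = -1 := by decide
  have s5 : Equiv.Perm.sign (finRotate 3) = 1 := by decide
  have s6 : Equiv.Perm.sign ((finRotate 3) * (finRotate 3)) = 1 := by decide
  have a10 : (1 : Equiv.Perm (Fin 3)) 0 = 0 := rfl
  have a11 : (1 : Equiv.Perm (Fin 3)) 1 = 1 := rfl
  have a12 : (1 : Equiv.Perm (Fin 3)) 2 = 2 := rfl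
  have a20 : (Equiv.swap (0:Fin 3) 1) 0 = 1 := rfl
  have a21 : (Equiv.swap (0:Fin 3) 1) 1 = 0 := rfl
  have a22 : (Equiv.swap (0:Fin 3) 1) 2 = 2 := rfl
  have a30 : (Equiv.swap (0:Fin 3) 2) 0 = 2 := rfl
  have a31 : (Equiv.swap (0:Fin 3) 2) 1 = 1 := rfl
  have a32 : (Equiv.swap (0:Fin 3) 2) 2 = 0 := rfl
  have a40 : (Equiv.swap (1:Fin 3) 2) 0 = 0 := rfl
  have a41 : (Equiv.swap (1:Fin 3) 2) 1 = 2 := rfl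
  have a42 : (Equiv.swap (1:Fin 3) 2) 2 = 1 := rfl
  have a50 : (finRotate 3) (0:Fin 3) = 1 := rfl
  have a51 : (finRotate 3) (1:Fin 3) = 2 := rfl
  have a52 : (finRotate 3) (2:Fin 3) = 0 := rfl
  have a60 : ((finRotate 3) * (finRotate 3)) (0:Fin 3) = 2 := rfl
  have a61 : ((finRotate 3) * (finRotate 3)) (1:Fin 3) = 0 := rfl
  have a62 : ((finRotate 3) * (finRotate 3)) (2:Fin 3) = 1 := rfl
  rw [hdetinv, hA, hScal, hH]
  simp only [perm3sum, s1, s2, s3, s4, s5, s6, a10, a11, a12, a20, a21, a22, a30, a31, a32,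
    a40, a41, a42, a50, a51, a52, a60, a61, a62, Units.val_neg, Units.val_one,
    Int.cast_neg, Int.cast_one, hRg, hRic, Matrix.trace_fin_three, Matrix.mul_apply,
    Matrix.sub_apply, Matrix.smul_apply, Matrix.det_fin_three, Fin.sum_univ_three,
    smul_eq_mul, Matrix.one_apply_eq,
    Matrix.one_apply_ne (show (0:Fin 3) ≠ 1 from by decide),
    Matrix.one_apply_ne (show (0:Fin 3) ≠ 2 from by decide),
    Matrix.one_apply_ne (show (1:Fin 3) ≠ 0 from by decide),
    Matrix.one_apply_ne (show (1:Fin 3) ≠ 2 from by decide),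
    Matrix.one_apply_ne (show (2:Fin 3) ≠ 0 from by decide),
    Matrix.one_apply_ne (show (2:Fin 3) ≠ 1 from by decide)]
  simp only [z1, z2, e0110, e0120, e0121, e0201, e0210, e0220, e0221, e1001, e1002, e1010, e1012, e1020, e1021, e1201, e1202, e1210, e1220, e1221, e2001, e2002, e2010, e2012, e2020, e2021, e2101, e2102, e2110, e2112, e2120, e2121, k10, k20, k21, l10, l20, l21]
  ring
end

section
/- Let θ₀ ∈ ℝ with 0 < θ₀ < π, let K ∈ ℝ, let k be a symmetric positive-definite real 2×2 matrix, and let A, B be symmetric real 2×2 matrices. Set C = csc θ₀ • B − cot θ₀ • A. For M a 2×2 matrix write tr_k M = tr (k⁻¹ * M) and |M|²_k = tr (k⁻¹ * M * k⁻¹ * M), and write Å = A − (tr_k A / 2) • k, B̊ = B − (tr_k B / 2) • k, and ⟨Å,B̊⟩_k = tr (k⁻¹ * Å * k⁻¹ * B̊). Then ∫_{θ₀ + π/2}^{3π/2} [ K − (1/2) * (tr_k A)² − (1/2) * (tr_k C)² + (1/2) * |A|²_k + (1/2) * |C|²_k + (tr_k (cos θ • A + sin θ • C))² − |cos θ • A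 + sin θ • C|²_k ] dθ = (π − θ₀) * K − (1/4) * cot θ₀ * ((tr_k A)² + (tr_k B)²) + (1/2) * csc θ₀ * (tr_k A) * (tr_k B) + (1/2) * cot θ₀ * (|Å|²_k + |B̊|²_k) − csc θ₀ * ⟨Å,B̊⟩_k. -/
/-!
With `Φ(X) = (tr_k X)² - |X|²_k` and `β` its polar form, the integrand is
`K - Φ(A)/2 - Φ(C)/2 + Φ(cos θ • A + sin θ • C)`, which by the double-angle formulas is
`K + (Φ(A) - Φ(C))/2 · cos 2θ + β(A, C) · sin 2θ`; this integrates to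
`(π - θ₀) K + (Φ(A) - Φ(C))/2 · sin θ₀ cos θ₀ + β(A, C) sin² θ₀`. Substituting
`C = csc θ₀ • B - cot θ₀ • A` turns this into `-cot θ₀ (Φ(A) + Φ(B))/2 + csc θ₀ β(A, B)` for any
symmetric bilinear form, and in dimension 2 removing the traces gives
`⟨Å, B̊⟩_k = ⟨A, B⟩_k - tr_k A tr_k B / 2`, which is the right-hand side.
-/

open Matrix Real intervalIntegral

namespace Matrix

variable {n 𝕜 : Type*} [Fintype n] [DecidableEq n] [Field 𝕜]

/-- The polar form of the Gauss-equation term `(tr_k X)² - |X|²_k`. -/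
noncomputable def gaussForm (k : Matrix n n 𝕜) : LinearMap.BilinForm 𝕜 (Matrix n n 𝕜) :=
  LinearMap.mk₂ 𝕜 (fun X Y => (k⁻¹ * X).trace * (k⁻¹ * Y).trace - (k⁻¹ * X * k⁻¹ * Y).trace)
    (fun X X' Y => by simp only [Matrix.mul_add, Matrix.add_mul, trace_add]; ring)
    (fun c X Y => by simp only [Matrix.mul_smul, Matrix.smul_mul, trace_smul, smul_eq_mul]; ring)
    (fun X Y Y' => by simp only [Matrix.mul_add, trace_add]; ring)
    (fun c X Y => by simp only [Matrix.mul_smul, trace_smul, smul_eq_mul]; ring)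

theorem gaussForm_apply (k X Y : Matrix n n 𝕜) :
    gaussForm k X Y = (k⁻¹ * X).trace * (k⁻¹ * Y).trace - (k⁻¹ * X * k⁻¹ * Y).trace :=
  rfl

theorem isSymm_gaussForm (k : Matrix n n 𝕜) : (gaussForm k).IsSymm := by
  refine ⟨fun X Y => ?_⟩
  rw [gaussForm_apply, gaussForm_apply, Matrix.mul_assoc (k⁻¹ * X), Matrix.mul_assoc (k⁻¹ * Y),
    trace_mul_comm (k⁻¹ * X), mul_comm]

theorem trace_sub_smul_one_mul_sub_smul_one (X Y : Matrix n n 𝕜) :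
    ((X - (X.trace / Fintype.card n) • 1) * (Y - (Y.trace / Fintype.card n) • 1)).trace =
      (X * Y).trace - X.trace * Y.trace / Fintype.card n := by
  simp only [Matrix.sub_mul, Matrix.mul_sub, Matrix.smul_mul, Matrix.mul_smul, Matrix.one_mul,
    Matrix.mul_one, trace_sub, trace_smul, trace_one, smul_eq_mul]
  rcases eq_or_ne (Fintype.card n : 𝕜) 0 with hn | hn
  · simp [hn]
  · field_simp
    ring

theorem trace_inv_mul_traceless_mul_inv_mul_traceless {k : Matrix n n 𝕜} (hk : IsUnit k.det)
    (A B : Matrix n n 𝕜) :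
    (k⁻¹ * (A - ((k⁻¹ * A).trace / Fintype.card n) • k) * k⁻¹ *
        (B - ((k⁻¹ * B).trace / Fintype.card n) • k)).trace =
      (k⁻¹ * A * k⁻¹ * B).trace - (k⁻¹ * A).trace * (k⁻¹ * B).trace / Fintype.card n := by
  have hinv (X : Matrix n n 𝕜) (c : 𝕜) : k⁻¹ * (X - c • k) = k⁻¹ * X - c • 1 := by
    rw [Matrix.mul_sub, Matrix.mul_smul, nonsing_inv_mul k hk]
  rw [Matrix.mul_assoc _ k⁻¹, hinv, hinv, trace_sub_smul_one_mul_sub_smul_one,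
    Matrix.mul_assoc (k⁻¹ * A)]

end Matrix

namespace LinearMap.BilinForm

variable {M : Type*} [AddCommGroup M] [Module ℝ M] {β : LinearMap.BilinForm ℝ M}

theorem IsSymm.apply_cos_smul_add_sin_smul (hβ : β.IsSymm) (u v : M) (θ : ℝ) :
    β (cos θ • u + sin θ • v) (cos θ • u + sin θ • v) =
      (β u u + β v v) / 2 + cos (2 * θ) * ((β u u - β v v) / 2) + sin (2 * θ) * β u v := by
  simp only [map_add, map_smul, LinearMap.add_apply, LinearMap.smul_apply, smul_eq_mul,
    hβ.eq v u, cos_two_mul, sin_two_mul]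
  linear_combination β v v * sin_sq_add_cos_sq θ

theorem IsSymm.apply_csc_smul_sub_cot_smul (hβ : β.IsSymm) {θ₀ : ℝ} (hs : sin θ₀ ≠ 0)
    {a b c : M} (hc : c = (sin θ₀)⁻¹ • b - (cos θ₀ / sin θ₀) • a) :
    (β a a - β c c) / 2 * (sin θ₀ * cos θ₀) + β a c * sin θ₀ ^ 2 =
      -(cos θ₀ / sin θ₀) * ((β a a + β b b) / 2) + (sin θ₀)⁻¹ * β a b := by
  subst hc
  simp only [map_sub, map_smul, LinearMap.sub_apply, LinearMap.smul_apply, smul_eq_mul,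
    hβ.eq b a]
  field_simp
  linear_combination (2 * β a b - cos θ₀ * β a a) * sin_sq_add_cos_sq θ₀

end LinearMap.BilinForm

theorem integral_add_cos_two_mul_add_sin_two_mul (θ₀ K p q : ℝ) :
    ∫ θ in (θ₀ + π / 2)..(3 * π / 2), (K + p * cos (2 * θ) + q * sin (2 * θ)) =
      (π - θ₀) * K + p * (sin θ₀ * cos θ₀) + q * sin θ₀ ^ 2 := by
  have hb : 2 * (3 * π / 2) = π + 2 * π := by ring
  have ha : 2 * (θ₀ + π / 2) = 2 * θ₀ + π := by ring
  have hcos : ∫ θ in (θ₀ + π / 2)..(3 * π / 2), cos (2 * θ) = sin θ₀ * cos θ₀ := by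
    rw [integral_comp_mul_left (fun x => cos x) two_ne_zero, integral_cos, ha, hb,
      sin_add_pi, sin_add_two_pi, sin_pi, sin_two_mul, smul_eq_mul]
    ring
  have hsin : ∫ θ in (θ₀ + π / 2)..(3 * π / 2), sin (2 * θ) = sin θ₀ ^ 2 := by
    rw [integral_comp_mul_left (fun x => sin x) two_ne_zero, integral_sin, ha, hb,
      cos_add_pi, cos_add_two_pi, cos_pi, cos_two_mul, cos_sq', smul_eq_mul]
    ring
  rw [integral_add, integral_add, integral_const, integral_const_mul, integral_const_mul,
    hcos, hsin, smul_eq_mul]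
  · ring
  all_goals exact Continuous.intervalIntegrable (by fun_prop) _ _

theorem stmt_11_general (θ₀ : ℝ) (h0 : 0 < θ₀) (h1 : θ₀ < π) (K : ℝ)
    (k : Matrix (Fin 2) (Fin 2) ℝ) (hk : k.PosDef)
    (A B : Matrix (Fin 2) (Fin 2) ℝ)
    (C : Matrix (Fin 2) (Fin 2) ℝ)
    (hC : C = (Real.sin θ₀)⁻¹ • B - (Real.cos θ₀ / Real.sin θ₀) • A)
    (trk : Matrix (Fin 2) (Fin 2) ℝ → ℝ)
    (htrk : ∀ M, trk M = (k⁻¹ * M).trace)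
    (nk : Matrix (Fin 2) (Fin 2) ℝ → ℝ)
    (hnk : ∀ M, nk M = (k⁻¹ * M * k⁻¹ * M).trace)
    (A₀ B₀ : Matrix (Fin 2) (Fin 2) ℝ)
    (hA₀ : A₀ = A - (trk A / 2) • k)
    (hB₀ : B₀ = B - (trk B / 2) • k) :
    (∫ θ in (θ₀ + π / 2)..(3 * π / 2),
        (K - (1 / 2) * (trk A) ^ 2 - (1 / 2) * (trk C) ^ 2
          + (1 / 2) * nk A + (1 / 2) * nk C
          + (trk (Real.cos θ • A + Real.sin θ • C)) ^ 2
          - nk (Real.cos θ • A + Real.sin θ • C))) =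
      (π - θ₀) * K
        - (1 / 4) * (Real.cos θ₀ / Real.sin θ₀) * ((trk A) ^ 2 + (trk B) ^ 2)
        + (1 / 2) * (Real.sin θ₀)⁻¹ * (trk A) * (trk B)
        + (1 / 2) * (Real.cos θ₀ / Real.sin θ₀) * (nk A₀ + nk B₀)
        - (Real.sin θ₀)⁻¹ * (k⁻¹ * A₀ * k⁻¹ * B₀).trace := by
  simp only [htrk, hnk] at hA₀ hB₀ ⊢
  have hβ := isSymm_gaussForm k
  have hintegrand (θ : ℝ) :
      K - (1 / 2) * (k⁻¹ * A).trace ^ 2 - (1 / 2) * (k⁻¹ * C).trace ^ 2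
          + (1 / 2) * (k⁻¹ * A * k⁻¹ * A).trace + (1 / 2) * (k⁻¹ * C * k⁻¹ * C).trace
          + (k⁻¹ * (cos θ • A + sin θ • C)).trace ^ 2
          - (k⁻¹ * (cos θ • A + sin θ • C) * k⁻¹ * (cos θ • A + sin θ • C)).trace =
        K + (gaussForm k A A - gaussForm k C C) / 2 * cos (2 * θ)
          + gaussForm k A C * sin (2 * θ) := by
    have := hβ.apply_cos_smul_add_sin_smul A C θ
    simp only [gaussForm_apply] at this ⊢
    linear_combination this
  have htraceless := trace_inv_mul_traceless_mul_inv_mul_traceless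
    ((isUnit_iff_isUnit_det k).mp hk.isUnit)
  simp only [Fintype.card_fin, Nat.cast_ofNat] at htraceless
  rw [integral_congr fun θ _ => hintegrand θ, integral_add_cos_two_mul_add_sin_two_mul, add_assoc,
    hβ.apply_csc_smul_sub_cot_smul (sin_pos_of_pos_of_lt_pi h0 h1).ne' hC, hA₀, hB₀,
    htraceless, htraceless, htraceless]
  simp only [gaussForm_apply]
  ring

theorem stmt_11 (θ₀ : ℝ) (h0 : 0 < θ₀) (h1 : θ₀ < π) (K : ℝ)
    (k : Matrix (Fin 2) (Fin 2) ℝ) (hk : k.PosDef) (hksym : k.IsSymm)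
    (A B : Matrix (Fin 2) (Fin 2) ℝ) (hA : A.IsSymm) (hB : B.IsSymm)
    (C : Matrix (Fin 2) (Fin 2) ℝ)
    (hC : C = (Real.sin θ₀)⁻¹ • B - (Real.cos θ₀ / Real.sin θ₀) • A)
    (trk : Matrix (Fin 2) (Fin 2) ℝ → ℝ)
    (htrk : ∀ M, trk M = (k⁻¹ * M).trace)
    (nk : Matrix (Fin 2) (Fin 2) ℝ → ℝ)
    (hnk : ∀ M, nk M = (k⁻¹ * M * k⁻¹ * M).trace)
    (A₀ B₀ : Matrix (Fin 2) (Fin 2) ℝ)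
    (hA₀ : A₀ = A - (trk A / 2) • k)
    (hB₀ : B₀ = B - (trk B / 2) • k) :
    (∫ θ in (θ₀ + π / 2)..(3 * π / 2),
        (K - (1 / 2) * (trk A) ^ 2 - (1 / 2) * (trk C) ^ 2
          + (1 / 2) * nk A + (1 / 2) * nk C
          + (trk (Real.cos θ • A + Real.sin θ • C)) ^ 2
          - nk (Real.cos θ • A + Real.sin θ • C))) =
      (π - θ₀) * K
        - (1 / 4) * (Real.cos θ₀ / Real.sin θ₀) * ((trk A) ^ 2 + (trk B) ^ 2)
        + (1 / 2) * (Real.sin θ₀)⁻¹ * (trk A) * (trk B)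
        + (1 / 2) * (Real.cos θ₀ / Real.sin θ₀) * (nk A₀ + nk B₀)
        - (Real.sin θ₀)⁻¹ * (k⁻¹ * A₀ * k⁻¹ * B₀).trace :=
  stmt_11_general θ₀ h0 h1 K k hk A B C hC trk htrk nk hnk A₀ B₀ hA₀ hB₀
end
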